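/- arXiv:2007.07164 — 2 statements merged into one kernel-verified Lean document; each statement's English description precedes it below -/
import Mathlib

section
/- For any bitstring y of length 2n+1 with exactly n+1 ones (n ≥ 1), there is a unique integer ℓ with 0 ≤ ℓ ≤ 2n such that the last 2n bits of the cyclic left-rotation of y by ℓ positions form a Dyck word. -/
/-!
Read `true` as a step `+1` and `false` as a step `-1`, and let `S k` be the height after `k`
steps of the walk along `y ++ y`. Since `y` has balance `1`, `S (r + N) = S r + 1` for
`N = |y|`. The suffix of `y.rotate ℓ` after its first letter is a Dyck word exactly when the
walk stays strictly above `S ℓ` during the `N` steps after `ℓ`. The last minimum of `S` on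
`[0, N)` has this property; and two such positions `a < b` would give
`S a < S b < S (a + N) = S a + 1`.
-/

/-- A Dyck word: a binary string (1 = `true`, 0 = `false`) with equally many 1s and 0s such
that every prefix has at least as many 1s as 0s. -/
def IsDyck (w : List Bool) : Prop :=
  w.count false = w.count true ∧ ∀ k, (w.take k).count false ≤ (w.take k).count true

def bal (w : List Bool) : ℤ := (w.count true : ℤ) - (w.count false : ℤ)

@[simp]
lemma bal_nil : bal [] = 0 := by simp [bal]

@[simp]
lemma bal_cons (b : Bool) (w : List Bool) : bal (b :: w) = (if b then 1 else -1) + bal w := by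
  cases b <;> simp [bal] <;> ring

lemma bal_append (v w : List Bool) : bal (v ++ w) = bal v + bal w := by
  simp only [bal, List.count_append]; push_cast; ring

lemma bal_take_add (w : List Bool) (a b : ℕ) :
    bal (w.take (a + b)) = bal (w.take a) + bal ((w.drop a).take b) := by
  rw [List.take_add, bal_append]

lemma List.Perm.bal_eq {v w : List Bool} (h : v.Perm w) : bal v = bal w := by
  simp only [bal, h.count_eq]

lemma isDyck_iff_bal (w : List Bool) : IsDyck w ↔ bal w = 0 ∧ ∀ k, 0 ≤ bal (w.take k) := by
  simp only [IsDyck, bal, sub_eq_zero, sub_nonneg, Nat.cast_inj, Nat.cast_le, eq_comm]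

lemma isDyck_drop_one_iff {r : List Bool} (hr : bal r = 1) :
    IsDyck (r.drop 1) ↔ ∀ j, 0 < j → j ≤ r.length → 0 < bal (r.take j) := by
  obtain _ | ⟨b, t⟩ := r
  · simp at hr
  simp only [List.drop_succ_cons, List.drop_zero, isDyck_iff_bal, List.length_cons]
  constructor
  · rintro ⟨ht, hpre⟩ j hj -
    obtain ⟨k, rfl⟩ := Nat.exists_eq_add_of_lt hj
    cases b <;> simp_all
    linarith [hpre k]
  · intro hpos
    have h₁ := hpos 1 one_pos (by omega)
    cases b
    · simp at h₁
    refine ⟨by simpa using hr, fun k => ?_⟩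
    rcases le_or_gt k t.length with hk | hk
    · simpa [Int.lt_iff_add_one_le, add_comm] using hpos (k + 1) k.succ_pos (by omega)
    · rw [List.take_of_length_le hk.le]
      simp at hr
      omega

lemma take_rotate_eq_take_drop_append_self {α : Type*} (l : List α) {i j : ℕ}
    (hi : i ≤ l.length) (hj : j ≤ l.length) :
    (l.rotate i).take j = ((l ++ l).drop i).take j := by
  have hdrop : (l ++ l).drop i = l.rotate i ++ l.drop i := by
    rw [List.drop_append_of_le_length hi, List.rotate_eq_drop_append_take hi,
      List.append_assoc, List.take_append_drop]
  rw [hdrop, List.take_append_of_le_length (by simpa using hj)]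

section CycleLemma

variable {N : ℕ} {S : ℕ → ℤ}

lemma exists_lt_forall_lt_add (hN : 0 < N) (hS : ∀ r < N, S (r + N) = S r + 1) :
    ∃ ℓ < N, ∀ j, 0 < j → j ≤ N → S ℓ < S (ℓ + j) := by
  classical
  obtain ⟨i, hi, hmin⟩ := (Finset.range N).exists_min_image S ⟨0, Finset.mem_range.2 hN⟩
  obtain ⟨ℓ, hℓ, hlast⟩ := ((Finset.range N).filter (S · = S i)).exists_max_image id
    ⟨i, Finset.mem_filter.2 ⟨hi, rfl⟩⟩
  simp only [Finset.mem_filter, Finset.mem_range, id] at hi hmin hℓ hlast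
  refine ⟨ℓ, hℓ.1, fun j hj hjN => ?_⟩
  rcases lt_or_ge (ℓ + j) N with hlt | hge
  · have hne : S (ℓ + j) ≠ S i := fun h => by have := hlast _ ⟨hlt, h⟩; omega
    have := hmin _ hlt
    omega
  · obtain ⟨r, hr⟩ : ∃ r, ℓ + j = r + N := ⟨ℓ + j - N, by omega⟩
    have := hmin r (by omega)
    rw [hr, hS r (by omega)]
    omega

lemma eq_of_forall_lt_add (hS : ∀ r < N, S (r + N) = S r + 1) {a b : ℕ} (ha : a < N)
    (hb : b < N) (hSa : ∀ j, 0 < j → j ≤ N → S a < S (a + j))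
    (hSb : ∀ j, 0 < j → j ≤ N → S b < S (b + j)) : a = b := by
  wlog hab : a < b generalizing a b
  · rcases (not_lt.1 hab).eq_or_lt with h | h
    · exact h.symm
    · exact (this hb ha hSb hSa h).symm
  have h₁ := hSa (b - a) (by omega) (by omega)
  have h₂ := hSb (a + N - b) (by omega) (by omega)
  rw [Nat.add_sub_cancel' hab.le] at h₁
  rw [show b + (a + N - b) = a + N by omega, hS a ha] at h₂
  omega

/-- The cycle lemma of Dvoretzky and Motzkin, for a walk `S` of period `N` and drift `1`. -/
theorem existsUnique_lt_forall_lt_add (hN : 0 < N) (hS : ∀ r < N, S (r + N) = S r + 1) :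
    ∃! ℓ, ℓ < N ∧ ∀ j, 0 < j → j ≤ N → S ℓ < S (ℓ + j) :=
  let ⟨ℓ, hℓ, hgood⟩ := exists_lt_forall_lt_add hN hS
  ⟨ℓ, ⟨hℓ, hgood⟩, fun _ ⟨hℓ', hgood'⟩ => eq_of_forall_lt_add hS hℓ' hℓ hgood' hgood⟩

end CycleLemma

theorem unique_rotation_dyck_suffix_general (n : ℕ) (y : List Bool)
    (hlen : y.length = 2 * n + 1) (hcount : y.count true = n + 1) :
    ∃! ℓ : ℕ, ℓ ≤ 2 * n ∧ IsDyck ((y.rotate ℓ).drop 1) := by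
  have hbal : bal y = 1 := by
    have := List.count_true_add_count_false y
    simp only [bal]
    omega
  set S : ℕ → ℤ := fun k => bal ((y ++ y).take k)
  have hS : ∀ r < 2 * n + 1, S (r + (2 * n + 1)) = S r + 1 := by
    intro r hr
    rw [← hlen] at hr ⊢
    simp only [S]
    rw [List.take_append_of_le_length hr.le, List.take_append,
      List.take_of_length_le (by omega), Nat.add_sub_cancel, bal_append, hbal, add_comm]
  refine (existsUnique_congr fun ℓ => ?_).2 (existsUnique_lt_forall_lt_add (by omega) hS)
  rw [Nat.lt_succ_iff]
  refine and_congr_right fun hℓ => ?_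
  rw [isDyck_drop_one_iff ((y.rotate_perm ℓ).bal_eq.trans hbal), List.length_rotate, hlen]
  refine forall₂_congr fun j _ => imp_congr_right fun hj => ?_
  rw [take_rotate_eq_take_drop_append_self y (by omega) (by omega)]
  simp only [S, bal_take_add]
  exact (lt_add_iff_pos_right _).symm

/-- For any bitstring `y` of length `2n+1` with exactly `n+1` ones (`n ≥ 1`),
there is a unique `ℓ` with `0 ≤ ℓ ≤ 2n` such that the last `2n` bits of the cyclic
left-rotation of `y` by `ℓ` positions form a Dyck word. -/
theorem unique_rotation_dyck_suffix (n : ℕ) (hn : 1 ≤ n) (y : List Bool)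
    (hlen : y.length = 2 * n + 1) (hcount : y.count true = n + 1) :
    ∃! ℓ : ℕ, ℓ ≤ 2 * n ∧ IsDyck ((y.rotate ℓ).drop 1) :=
  unique_rotation_dyck_suffix_general n y hlen hcount
end

section
/- Applying the middle-levels map f twice to a string x ∈ A_n rotates its associated rooted tree once and increments its offset: t(f(f(x))) = t(f(x)) = ρ(t(x)), ℓ(f(x)) = ℓ(x), and ℓ(f(f(x))) = ℓ(x) + 1 (mod 2n+1). -/
lemma count_tf (l : List Bool) : l.count true + l.count false = l.length := by
  induction l with
  | nil => simp
  | cons a l ih => cases a <;> simp [List.count_cons] <;> omega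

lemma count_rot (l : List Bool) (k : ℕ) (a : Bool) : (l.rotate k).count a = l.count a :=
  (l.rotate_perm k).count_eq a

lemma rotate_reduce (l : List Bool) (a L : ℕ) (hL : l.length = L) (h : L ≤ a) :
    l.rotate a = l.rotate (a - L) := by
  subst hL
  conv_lhs => rw [show a = l.length + (a - l.length) by omega]
  rw [← List.rotate_rotate, List.rotate_length]

lemma dyck_append {u v : List Bool} (hu : IsDyck u) (hv : IsDyck v) : IsDyck (u ++ v) := by
  constructor
  · simp [List.count_append, hu.1, hv.1]
  · intro k
    rw [List.take_append]
    simp only [List.count_append]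
    exact Nat.add_le_add (hu.2 k) (hv.2 _)

lemma dyck_nest {v : List Bool} (hv : IsDyck v) : IsDyck (true :: v ++ [false]) := by
  constructor
  · simp [List.count_append, List.count_cons, hv.1]
  · intro k
    cases k with
    | zero => simp
    | succ m =>
      simp only [List.cons_append, List.take_succ_cons, List.count_cons]
      rw [List.take_append]
      simp only [List.count_append]
      have h1 := hv.2 m
      cases h : m - v.length with
      | zero => simp; omega
      | succ j => simp; omega

lemma dyck_decomp {w : List Bool} (hw : IsDyck w) (hne : w ≠ []) :
    ∃ u v, IsDyck u ∧ IsDyck v ∧ w = true :: u ++ false :: v := by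
  obtain ⟨b, w', rfl⟩ := List.exists_cons_of_ne_nil hne
  -- first char is true
  have hb : b = true := by
    have := hw.2 1
    simp [List.count_cons] at this
    cases b
    · simp at this
    · rfl
  subst hb
  have htot : w'.count false = w'.count true + 1 := by
    have := hw.1
    simp [List.count_cons] at this
    omega
  have hP : ∃ k, (w'.take k).count true < (w'.take k).count false := by
    exact ⟨w'.length, by simp [htot]⟩
  classical
  set k := Nat.find hP with hk
  have hkP : (w'.take k).count true < (w'.take k).count false := Nat.find_spec hP
  have hmin : ∀ j, j < k → (w'.take j).count false ≤ (w'.take j).count true := by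
    intro j hj
    have := Nat.find_min hP hj
    omega
  have hk1 : 1 ≤ k := by
    rcases Nat.eq_zero_or_pos k with h | h
    · rw [h] at hkP; simp at hkP
    · exact h
  have hklen : k ≤ w'.length := by
    by_contra h
    push_neg at h
    have h2 : w'.take w'.length = w'.take k := by
      rw [List.take_length, List.take_of_length_le (le_of_lt h)]
    have := hmin w'.length (by omega)
    rw [List.take_length] at this
    omega
  clear_value k
  obtain ⟨m, rfl⟩ : ∃ m, k = m + 1 := ⟨k - 1, by omega⟩
  have hm : m < w'.length := by omega
  have htk : w'.take (m+1) = w'.take m ++ [w'[m]] := by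
    rw [List.take_succ]
    simp [List.getElem?_eq_getElem hm]
  have hmle := hmin m (by omega)
  -- the element at m is false
  have hc : w'[m] = false := by
    by_contra h
    have hc' : w'[m] = true := by revert h; cases w'[m] <;> simp
    rw [htk, hc'] at hkP
    simp [List.count_append] at hkP
    omega
  rw [htk, hc] at hkP
  simp [List.count_append] at hkP
  have hequ : (w'.take m).count false = (w'.take m).count true := by omega
  refine ⟨w'.take m, w'.drop (m+1), ⟨hequ, ?_⟩, ⟨?_, ?_⟩, ?_⟩
  · intro j
    rw [List.take_take]
    rcases le_or_gt m j with h | h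
    · rw [min_eq_right h]; exact hmle
    · rw [min_eq_left (le_of_lt h)]; exact hmin j (by omega)
  · -- totals for v
    have hsplit : w' = w'.take (m+1) ++ w'.drop (m+1) := (List.take_append_drop _ _).symm
    have h1 : w'.count false = (w'.take (m+1)).count false + (w'.drop (m+1)).count false := by
      rw [← List.count_append, List.take_append_drop]
    have h2 : w'.count true = (w'.take (m+1)).count true + (w'.drop (m+1)).count true := by
      rw [← List.count_append, List.take_append_drop]
    rw [htk, hc] at h1 h2
    simp [List.count_append] at h1 h2
    omega
  · -- prefixes for v
    intro j
    have hpre := hw.2 (m + 2 + j)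
    have : (true :: w').take (m+2+j) = true :: (w'.take (m+1) ++ (w'.drop (m+1)).take j) := by
      rw [show m + 2 + j = (m + 1 + j) + 1 by omega]
      rw [List.take_succ_cons, List.take_add]
    rw [this, htk, hc] at hpre
    simp [List.count_cons, List.count_append] at hpre
    omega
  · conv_lhs => rw [show w' = w'.take (m+1) ++ w'.drop (m+1) from (List.take_append_drop _ _).symm]
    rw [htk, hc]
    simp

lemma notDyck_rotA {t : List Bool} (ht : IsDyck t) {d : ℕ} (hd1 : 1 ≤ d) (hd2 : d ≤ t.length) :
    ¬ IsDyck (((t ++ [false]).rotate d).take t.length) := by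
  intro h
  set N := t.length with hN
  have hrot : (t ++ [false]).rotate d = (t.drop d ++ [false]) ++ t.take d := by
    rw [List.rotate_eq_drop_append_take (by simp; omega),
      List.drop_append_of_le_length hd2, List.take_append_of_le_length hd2]
  have hpre := h.2 (N + 1 - d)
  have htk : ((((t ++ [false]).rotate d).take N).take (N + 1 - d)) = t.drop d ++ [false] := by
    rw [List.take_take, min_eq_left (by omega), hrot]
    rw [List.take_left' (by simp; omega)]
  rw [htk] at hpre
  have hsplit1 : (t.take d).count false + (t.drop d).count false = t.count false := by
    rw [← List.count_append, List.take_append_drop]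
  have hsplit2 : (t.take d).count true + (t.drop d).count true = t.count true := by
    rw [← List.count_append, List.take_append_drop]
  have hdle := ht.2 d
  have heq := ht.1
  simp [List.count_append] at hpre
  omega

lemma notDyck_rotB {s : List Bool} (hs : IsDyck s) {d : ℕ} (hd1 : 1 ≤ d) (hd2 : d ≤ s.length) :
    ¬ IsDyck (((true :: s).rotate d).drop 1) := by
  intro h
  set N := s.length with hN
  have hdrop : (true :: s).drop d = s.drop (d - 1) := by
    cases d with
    | zero => omega
    | succ m => simp
  have htake : (true :: s).take d = true :: s.take (d - 1) := by
    cases d with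
    | zero => omega
    | succ m => simp
  have hne : s.drop (d - 1) ≠ [] := by
    apply List.ne_nil_of_length_pos
    simp; omega
  obtain ⟨e, rest, her⟩ := List.exists_cons_of_ne_nil hne
  have hrot : (true :: s).rotate d = (e :: rest) ++ (true :: s.take (d - 1)) := by
    rw [List.rotate_eq_drop_append_take (by simp; omega), hdrop, htake, her]
  have hM : ((true :: s).rotate d).drop 1 = rest ++ (true :: s.take (d - 1)) := by
    rw [hrot]; rfl
  -- counts of s split at d-1
  have hsplit : s = s.take (d-1) ++ (e :: rest) := by
    conv_lhs => rw [← List.take_append_drop (d-1) s]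
    rw [her]
  have hs1 : s.count false = (s.take (d-1)).count false + (e :: rest).count false := by
    conv_lhs => rw [hsplit]; rw [List.count_append]
  have hs2 : s.count true = (s.take (d-1)).count true + (e :: rest).count true := by
    conv_lhs => rw [hsplit]; rw [List.count_append]
  have hpref := hs.2 (d-1)
  have heq := hs.1
  have hMeq := h.1
  rw [hM] at hMeq
  simp [List.count_append, List.count_cons] at hMeq
  -- prefix of M of length rest.length
  have hMpre := h.2 rest.length
  rw [hM, List.take_left] at hMpre
  cases e <;> simp [List.count_cons] at hs1 hs2 <;> omega

/-- Applying the middle-levels map `f` twice to `x ∈ A_n` (length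
`2n+1`, exactly `n` ones) rotates the associated rooted tree once and increments the
offset: `t(f(f(x))) = t(f(x)) = ρ(t(x))`, `ℓ(f(x)) = ℓ(x)` and
`ℓ(f(f(x))) = ℓ(x) + 1 (mod 2n+1)`.  Here `t(x) = (σ^{ℓ(x)}(x)).take(2n)` for `x ∈ A_n`,
`t(y) = (σ^{ℓ(y)}(y)).drop 1` for `y ∈ B_n`, `ρ` is the tree rotation
`ρ(1 u 0 v) = u 1 v 0`, and `f` is defined by `f(1 u 0 v 0) = 1 u 1 v 0`,
`f(1 u 1 v 0) = 0 u 1 v 0`, extended by conjugation with the rotation `ℓ`. -/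
theorem f_squared_rotates_tree (n : ℕ) (hn : 1 ≤ n)
    (f : List Bool → List Bool) (ell : List Bool → ℕ) (rho : List Bool → List Bool)
    (hrho : ∀ u v : List Bool, IsDyck u → IsDyck v →
      rho (true :: u ++ false :: v) = u ++ true :: v ++ [false])
    (hf1 : ∀ u v : List Bool, IsDyck u → IsDyck v →
      f (true :: u ++ false :: v ++ [false]) = true :: u ++ true :: v ++ [false])
    (hf2 : ∀ u v : List Bool, IsDyck u → IsDyck v →
      f (true :: u ++ true :: v ++ [false]) = false :: u ++ true :: v ++ [false])
    (hellA : ∀ x : List Bool, x.length = 2 * n + 1 → x.count true = n →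
      ell x ≤ 2 * n ∧ IsDyck ((x.rotate (ell x)).take (2 * n)))
    (hellB : ∀ y : List Bool, y.length = 2 * n + 1 → y.count true = n + 1 →
      ell y ≤ 2 * n ∧ IsDyck ((y.rotate (ell y)).drop 1))
    (hf3 : ∀ x : List Bool, x.length = 2 * n + 1 →
      (x.count true = n ∨ x.count true = n + 1) →
      f x = (f (x.rotate (ell x))).rotate (2 * n + 1 - ell x))
    (x : List Bool) (hlen : x.length = 2 * n + 1) (hcount : x.count true = n) :
    ((f (f x)).rotate (ell (f (f x)))).take (2 * n) = rho ((x.rotate (ell x)).take (2 * n)) ∧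
    ((f x).rotate (ell (f x))).drop 1 = rho ((x.rotate (ell x)).take (2 * n)) ∧
    ell (f x) = ell x ∧
    ell (f (f x)) = (ell x + 1) % (2 * n + 1) := by
  classical
  obtain ⟨hr2n, htD⟩ := hellA x hlen hcount
  set r := ell x with hrdef
  set xr := x.rotate r with hxrdef
  set t := xr.take (2*n) with htdef
  have hxrlen : xr.length = 2*n+1 := by rw [hxrdef, List.length_rotate]; exact hlen
  have hxrct : xr.count true = n := by rw [hxrdef, count_rot]; exact hcount
  have htlen : t.length = 2*n := by rw [htdef, List.length_take, hxrlen]; omega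
  have htct : t.count true = n := by
    have h1 := count_tf t
    have h2 := htD.1
    omega
  -- xr = t ++ [false]
  have hxreq : xr = t ++ [false] := by
    have h1 : xr = t ++ xr.drop (2*n) := (List.take_append_drop _ _).symm
    have h2 : (xr.drop (2*n)).length = 1 := by rw [List.length_drop, hxrlen]; omega
    obtain ⟨a, ha⟩ := List.length_eq_one_iff.mp h2
    have h3 : xr.count true = t.count true + (xr.drop (2*n)).count true := by
      conv_lhs => rw [h1]
      rw [List.count_append]
    rw [ha] at h3 h1
    cases a with
    | false => exact h1
    | true => rw [hxrct, htct] at h3; simp at h3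
  -- decompose t
  obtain ⟨u, v, hu, hv, hteq⟩ := dyck_decomp htD (by
    intro h; rw [h] at htlen; simp at htlen; omega)
  have hρD : IsDyck (u ++ true :: v ++ [false]) := by
    have h := dyck_append hu (dyck_nest hv)
    simp only [List.append_assoc, List.cons_append] at h ⊢
    exact h
  have hρlen : (u ++ true :: v ++ [false]).length = 2*n := by
    have : t.length = (true :: u ++ false :: v).length := by rw [hteq]
    rw [htlen] at this
    simp at this ⊢
    omega
  have hρct : (u ++ true :: v ++ [false]).count true = n := by
    have h1 := count_tf (u ++ true :: v ++ [false])
    have h2 := hρD.1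
    omega
  have hrho_t : rho t = u ++ true :: v ++ [false] := by rw [hteq]; exact hrho u v hu hv
  -- f of the rotated x
  have hfxr : f xr = true :: (u ++ true :: v ++ [false]) := by
    have h1 := hf1 u v hu hv
    rw [hxreq, hteq]
    have h2 : (true :: u ++ false :: v) ++ [false] = true :: u ++ false :: v ++ [false] := by
      simp
    rw [h2, h1]
    simp
  have hfx : f x = (true :: (u ++ true :: v ++ [false])).rotate (2*n+1-r) := by
    rw [hf3 x hlen (Or.inl hcount), ← hxrdef, ← hrdef, hfxr]
  have hy'len : (true :: (u ++ true :: v ++ [false])).length = 2*n+1 := by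
    simp only [List.length_cons, hρlen]
  have hfxlen : (f x).length = 2*n+1 := by rw [hfx, List.length_rotate, hy'len]
  have hfxct : (f x).count true = n+1 := by
    rw [hfx, count_rot]
    simp [List.count_cons] at hρct ⊢
    omega
  obtain ⟨hs2n, hsD⟩ := hellB (f x) hfxlen hfxct
  set s := ell (f x) with hsdef
  have hcomp : (f x).rotate s = (true :: (u ++ true :: v ++ [false])).rotate (2*n+1-r+s) := by
    rw [hfx, List.rotate_rotate]
  -- determine s = r
  have hsr : s = r := by
    by_contra hne
    rcases le_or_gt (2*n+1-r+s) (2*n) with hc | hc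
    · exact notDyck_rotB hρD (by omega) (by rw [hρlen]; omega) (hcomp ▸ hsD)
    · have hred : (true :: (u ++ true :: v ++ [false])).rotate (2*n+1-r+s)
          = (true :: (u ++ true :: v ++ [false])).rotate (2*n+1-r+s - (2*n+1)) :=
        rotate_reduce _ _ _ hy'len (by omega)
      have hm' : 2*n+1-r+s - (2*n+1) ≠ 0 := by omega
      have hm'le : 2*n+1-r+s - (2*n+1) ≤ 2*n := by omega
      exact notDyck_rotB hρD (by omega) (by rw [hρlen]; omega)
        ((hcomp.trans hred) ▸ hsD)
  have hrotfx : (f x).rotate s = true :: (u ++ true :: v ++ [false]) := by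
    rw [hcomp, hsr]
    rw [show 2*n+1-r+r = 2*n+1 by omega, ← hy'len, List.rotate_length]
  have hconc2 : ((f x).rotate s).drop 1 = rho t := by
    rw [hrotfx, hrho_t]
    rfl
  -- now f (f x)
  have hffx : f (f x) = (false :: (u ++ true :: v ++ [false])).rotate (2*n+1-r) := by
    rw [hf3 (f x) hfxlen (Or.inr hfxct), ← hsdef, hrotfx]
    have h1 := hf2 u v hu hv
    have h2 : (true :: (u ++ true :: v ++ [false])) = true :: u ++ true :: v ++ [false] := by simp
    have h3 : (false :: u ++ true :: v ++ [false]) = false :: (u ++ true :: v ++ [false]) := by simp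
    rw [h2, h1, h3, hsr]
  -- z' = w.rotate 2n with w = ρt ++ [false]
  have hwlen : ((u ++ true :: v ++ [false]) ++ [false]).length = 2*n+1 := by
    rw [List.length_append, hρlen]
    simp
  have hz' : ((u ++ true :: v ++ [false]) ++ [false]).rotate (2*n)
      = false :: (u ++ true :: v ++ [false]) := by
    rw [List.rotate_eq_drop_append_take (by rw [hwlen]; omega)]
    rw [← hρlen, List.drop_left, List.take_left]
    rfl
  have hffx2 : f (f x) = ((u ++ true :: v ++ [false]) ++ [false]).rotate (2*n + (2*n+1-r)) := by
    rw [hffx, ← hz', List.rotate_rotate]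
  have hffxlen : (f (f x)).length = 2*n+1 := by rw [hffx2, List.length_rotate, hwlen]
  have hffxct : (f (f x)).count true = n := by
    rw [hffx2, count_rot, List.count_append, hρct]
    simp
  obtain ⟨hq2n, hqD⟩ := hellA (f (f x)) hffxlen hffxct
  set q := ell (f (f x)) with hqdef
  have hcomp2 : (f (f x)).rotate q
      = ((u ++ true :: v ++ [false]) ++ [false]).rotate (2*n + (2*n+1-r) + q) := by
    rw [hffx2, List.rotate_rotate]
  have hred1 : ((u ++ true :: v ++ [false]) ++ [false]).rotate (2*n + (2*n+1-r) + q)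
      = ((u ++ true :: v ++ [false]) ++ [false]).rotate (2*n - r + q) := by
    rw [rotate_reduce _ _ _ hwlen (by omega)]
    congr 1
    omega
  -- the good rotation offsets
  have hnotA : ∀ d, 1 ≤ d → d ≤ 2*n →
      ¬ IsDyck ((((u ++ true :: v ++ [false]) ++ [false]).rotate d).take (2*n)) := by
    intro d h1 h2 hDy
    exact notDyck_rotA hρD h1 (by rw [hρlen]; omega) (by rw [hρlen]; exact hDy)
  have hq_val : 2*n - r + q = 0 ∨ 2*n - r + q = 2*n+1 := by
    by_contra hcon
    push_neg at hcon
    obtain ⟨hc1, hc2⟩ := hcon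
    rcases le_or_gt (2*n - r + q) (2*n) with hc | hc
    · exact hnotA _ (by omega) hc ((hcomp2.trans hred1) ▸ hqD)
    · have hred2 : ((u ++ true :: v ++ [false]) ++ [false]).rotate (2*n - r + q)
          = ((u ++ true :: v ++ [false]) ++ [false]).rotate (2*n - r + q - (2*n+1)) :=
        rotate_reduce _ _ _ hwlen (by omega)
      exact hnotA _ (by omega) (by omega)
        ((hcomp2.trans (hred1.trans hred2)) ▸ hqD)
  have hrot0 : ((u ++ true :: v ++ [false]) ++ [false]).rotate (2*n - r + q)
      = (u ++ true :: v ++ [false]) ++ [false] := by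
    rcases hq_val with h | h
    · rw [h, List.rotate_zero]
    · rw [h, ← hwlen, List.rotate_length]
  have hconc1 : ((f (f x)).rotate q).take (2*n) = rho t := by
    rw [hcomp2, hred1, hrot0, ← hρlen, List.take_left, hrho_t]
  have hconc4 : q = (r + 1) % (2*n+1) := by
    rcases hq_val with h | h
    · have hr2 : r = 2*n := by omega
      have hq0 : q = 0 := by omega
      rw [hq0, hr2, show 2*n+1 = 2*n+1 from rfl]
      rw [Nat.mod_self]
    · have hq1 : q = r + 1 := by omega
      rw [hq1, Nat.mod_eq_of_lt (by omega)]
  exact ⟨hconc1, hconc2, hsr, hconc4⟩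
end
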